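/- Let μ be a partition of n with distinct parts, let t be a μ-tableau, and let π ∈ S_n be an m-involution (m ≥ 1) such that ⟨π·e_t, e_t⟩ is odd. Then m ≥ (n − |μ|_a)/2; equivalently, m ≥ Σ_{j≥1} μ_{2j}. -/

import Mathlib

noncomputable section
open scoped Classical

/-- The cells of the Young diagram of a partition `μ` (given as a list of parts):
pairs of a row index `r` and a column index `c < μ_r`. -/
abbrev YoungCell (μ : List ℕ) := (r : Fin μ.length) × Fin (μ.get r)

/-- A `μ`-tableau: a bijective filling of the Young diagram of `μ` with the symbols
`1, …, n` (here: the elements of `Fin n`). -/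
abbrev YoungTableau (n : ℕ) (μ : List ℕ) := YoungCell μ ≃ Fin n

/-- A family of rows is a `μ`-tabloid: row `r` has `μ_r` elements, the rows are pairwise
disjoint and cover `{1, …, n}`. -/
def IsTabloid (n : ℕ) (μ : List ℕ) (R : Fin μ.length → Finset (Fin n)) : Prop :=
  (∀ r, (R r).card = μ.get r) ∧
  (∀ r s, r ≠ s → Disjoint (R r) (R s)) ∧
  (∀ i, ∃ r, i ∈ R r)

/-- A `μ`-tabloid: an ordered partition of `{1, …, n}` with block sizes `μ₁, …, μ_ℓ`. -/
def Tabloid (n : ℕ) (μ : List ℕ) := {R : Fin μ.length → Finset (Fin n) // IsTabloid n μ R}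

variable {n : ℕ} {μ : List ℕ}

/-- The action of a permutation on a tabloid, applying it to each row. -/
def permTabloid (π : Equiv.Perm (Fin n)) (R : Tabloid n μ) : Tabloid n μ :=
  ⟨fun r => (R.1 r).image π, by
    obtain ⟨h1, h2, h3⟩ := R.2
    refine ⟨fun r => ?_, fun r s hrs => ?_, fun i => ?_⟩
    · rw [Finset.card_image_of_injective _ π.injective, h1 r]
    · exact (Finset.disjoint_image π.injective).mpr (h2 r s hrs)
    · obtain ⟨r, hr⟩ := h3 (π⁻¹ i)
      exact ⟨r, Finset.mem_image.mpr ⟨π⁻¹ i, hr, by simp⟩⟩⟩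

/-- The action of a permutation on a tableau (postcomposition). -/
def permTableau (π : Equiv.Perm (Fin n)) (t : YoungTableau n μ) : YoungTableau n μ :=
  t.trans π

/-- The tabloid `{t}` determined by a tableau `t`: its `r`-th row is the set of entries
in the `r`-th row of `t`. -/
def tabloidOf (t : YoungTableau n μ) : Tabloid n μ :=
  ⟨fun r => Finset.univ.image fun c : Fin (μ.get r) => t ⟨r, c⟩, by
    refine ⟨fun r => ?_, fun r s hrs => ?_, fun i => ?_⟩
    · rw [Finset.card_image_of_injective, Finset.card_univ, Fintype.card_fin]
      intro c₁ c₂ h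
      have := t.injective h
      exact (Sigma.mk.inj_iff.mp this).2.eq
    · rw [Finset.disjoint_left]
      rintro a ha hb
      obtain ⟨c₁, -, h₁⟩ := Finset.mem_image.mp ha
      obtain ⟨c₂, -, h₂⟩ := Finset.mem_image.mp hb
      have := t.injective (h₁.trans h₂.symm)
      exact hrs (Sigma.mk.inj_iff.mp this).1
    · refine ⟨(t.symm i).1,
        Finset.mem_image.mpr ⟨(t.symm i).2, Finset.mem_univ _, ?_⟩⟩
      exact t.apply_symm_apply i⟩

/-- The (index of the) row of a tableau containing a given symbol. -/
def rowIdx (t : YoungTableau n μ) (i : Fin n) : ℕ :=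
  ((t.symm i).1 : ℕ)

/-- The (index of the) column of a tableau containing a given symbol. -/
def colIdx (t : YoungTableau n μ) (i : Fin n) : ℕ :=
  ((t.symm i).2 : ℕ)

/-- The column stabilizer `C_t` of a tableau: the permutations preserving each column. -/
def colStab (t : YoungTableau n μ) : Finset (Equiv.Perm (Fin n)) :=
  Finset.univ.filter fun σ => ∀ i, colIdx t (σ i) = colIdx t i

/-- Membership in the row stabilizer `R_t` of a tableau. -/
def memRowStab (t : YoungTableau n μ) (π : Equiv.Perm (Fin n)) : Prop :=
  ∀ i, rowIdx t (π i) = rowIdx t i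

/-- The polytabloid `e_t = Σ_{σ ∈ C_t} sgn(σ)·{σt}` of a tableau `t`, an element of the
free `ℤ`-module `M^μ` on the `μ`-tabloids. -/
def polytabloid (t : YoungTableau n μ) : Tabloid n μ →₀ ℤ :=
  ∑ σ ∈ colStab t, ((Equiv.Perm.sign σ : ℤˣ) : ℤ) • Finsupp.single (tabloidOf (permTableau σ t)) 1

/-- The symmetric bilinear form on `M^μ` making the tabloids orthonormal. -/
def tabForm (x y : Tabloid n μ →₀ ℤ) : ℤ :=
  x.sum fun T a => a * y T

/-- The action of a permutation on `M^μ`, permuting the tabloid basis. -/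
def permMap (π : Equiv.Perm (Fin n)) (x : Tabloid n μ →₀ ℤ) : Tabloid n μ →₀ ℤ :=
  Finsupp.mapDomain (permTabloid π) x

/-- `supp(t)`: the set of tabloids `{σt}` for `σ ∈ C_t`. -/
def tabSupp (t : YoungTableau n μ) : Finset (Tabloid n μ) :=
  (colStab t).image fun σ => tabloidOf (permTableau σ t)

/-!
Modulo two, `⟨π e_t, e_t⟩` counts the `σ ∈ C_t` for which `π` fixes the tabloid `{σt}`.
For such `σ` let `g` exchange, in every column of `σt`, the entries of rows `2i - 1` and `2i`.
The involutions `π` and `g` act on every cycle of `π g` as a dihedral group acts on a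
polygon, and exchanging rows along all cycles of `π g` free of fixed points of `g` is an
involution on these `σ` that does not change `g`. If their number is odd, some `σ` has no
such cycle; then every fixed point of `π` shares a cycle with a fixed point of `g`, and no two
fixed points of `π` share one. So `n - 2m` is at most the number of fixed points of `g`, which
is `n - 2 ∑_j μ_{2j}` because every cell in a row `2j` has a partner in row `2j - 1`.
-/

open Equiv Equiv.Perm

namespace Equiv.Perm

variable {X : Type*} {f g : Perm X}

lemma mul_inv_rev_of_mul_self (hf : f * f = 1) (hg : g * g = 1) : (f * g)⁻¹ = g * f := by
  rw [mul_inv_rev, inv_eq_of_mul_eq_one_right hf, inv_eq_of_mul_eq_one_right hg]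

lemma apply_zpow_mul_left (hf : f * f = 1) (hg : g * g = 1) (i : ℤ) (x : X) :
    f (((f * g) ^ i) x) = ((f * g) ^ (-i)) (f x) := by
  have : SemiconjBy f (f * g) (f * g)⁻¹ := by
    rw [SemiconjBy, mul_inv_rev_of_mul_self hf hg, ← mul_assoc, hf, one_mul, mul_assoc, hf, mul_one]
  rw [← inv_zpow', ← mul_apply, this.zpow_right i, mul_apply]

lemma apply_zpow_mul_right (hf : f * f = 1) (hg : g * g = 1) (i : ℤ) (x : X) :
    g (((f * g) ^ i) x) = ((f * g) ^ (-i)) (g x) := by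
  have : SemiconjBy g (f * g) (f * g)⁻¹ := by
    rw [SemiconjBy, mul_inv_rev_of_mul_self hf hg, ← mul_assoc]
  rw [← inv_zpow', ← mul_apply, this.zpow_right i, mul_apply]

lemma zpow_sub_apply_eq_self {r : Perm X} {x : X} {i j : ℤ} (h : (r ^ i) x = (r ^ j) x) :
    (r ^ (j - i)) x = x := by
  rw [sub_eq_neg_add, zpow_add, mul_apply, ← h, ← mul_apply, ← zpow_add, neg_add_cancel,
    zpow_zero, one_apply]

/-- On each cycle of the rotation `f * g` the reflections `f` and `g` act as in a dihedral
group: if a cycle through a fixed point of `f` contains a fixed point of `g`, it has odd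
length, and then `f` has no other fixed point on it. -/
theorem SameCycle.eq_of_isFixedPt (hf : f * f = 1) (hg : g * g = 1) {b b' y : X}
    (hb : f b = b) (hb' : f b' = b') (hy : g y = y) (h : (f * g).SameCycle b y)
    (h' : (f * g).SameCycle b' y) : b = b' := by
  obtain ⟨i, rfl⟩ := h.trans h'.symm
  obtain ⟨j, rfl⟩ := h
  have h2i : ((f * g) ^ (i - -i)) b = b := by
    refine zpow_sub_apply_eq_self ?_
    conv_rhs => rw [← hb', apply_zpow_mul_left hf hg, hb]
  have h2j : ((f * g) ^ (j - -(j + 1))) b = b := by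
    refine zpow_sub_apply_eq_self ?_
    conv_rhs => rw [← hy, apply_zpow_mul_right hf hg, ← hb, ← mul_apply g f,
      ← mul_inv_rev_of_mul_self hf hg, ← mul_apply, ← zpow_sub_one]
    rw [neg_add', sub_eq_add_neg]
  have : (f * g) ^ i = ((f * g) ^ (j - -(j + 1))) ^ i * ((f * g) ^ (i - -i)) ^ (-j) := by
    rw [← zpow_mul, ← zpow_mul, ← zpow_add]; ring_nf
  rw [this, mul_apply, zpow_apply_eq_self_of_apply_eq_self h2i,
    zpow_apply_eq_self_of_apply_eq_self h2j]

theorem card_support_le_of_forall_sameCycle [Fintype X] [DecidableEq X] (hf : f * f = 1)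
    (hg : g * g = 1)
    (H : ∀ x, f x = x → ∃ y, (f * g).SameCycle x y ∧ g y = y) :
    g.support.card ≤ f.support.card := by
  have hfix : f.supportᶜ.card ≤ g.supportᶜ.card := by
    refine Finset.card_le_card_of_forall_subsingleton (fun x y => (f * g).SameCycle x y)
      (fun x hx => ?_) (fun y hy x hx x' hx' => ?_)
    · obtain ⟨y, hxy, hy⟩ := H x (by simpa using hx)
      exact ⟨y, by simpa using hy, hxy⟩
    · simp only [Finset.mem_compl, mem_support, not_not, Set.mem_ofPred_eq] at *
      exact hx.2.eq_of_isFixedPt hf hg hx.1 hx'.1 (by simpa using hy) hx'.2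
  rw [Finset.card_compl, Finset.card_compl] at hfix
  have := Finset.card_le_univ f.support
  have := Finset.card_le_univ g.support
  omega

def freeCycles (f g : Perm X) : Set X := {x | ∀ y, (f * g).SameCycle x y → g y ≠ y}

lemma apply_ne_of_mem_freeCycles {x : X} (hx : x ∈ freeCycles f g) : g x ≠ x :=
  hx x (SameCycle.refl _ _)

lemma mem_freeCycles_of_sameCycle {x x' : X} (hx : x ∈ freeCycles f g)
    (h : (f * g).SameCycle x x') : x' ∈ freeCycles f g :=
  fun y hy => hx y (h.trans hy)

lemma apply_mem_freeCycles_left (hf : f * f = 1) (hg : g * g = 1) {x : X} :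
    f x ∈ freeCycles f g ↔ x ∈ freeCycles f g := by
  have key : ∀ x, x ∈ freeCycles f g → f x ∈ freeCycles f g := by
    rintro x hx y ⟨i, rfl⟩ hy
    refine hx _ ?_ hy
    have h₁ : (f * g).SameCycle x (f (((f * g) ^ i) (f x))) :=
      ⟨-i, by rw [apply_zpow_mul_left hf hg, ← mul_apply f f, hf, one_apply]⟩
    have h₂ : (f * g).SameCycle (((f * g) ^ i) (f x)) (f (((f * g) ^ i) (f x))) :=
      ⟨1, by rw [zpow_one, mul_apply, hy]⟩
    exact h₁.trans h₂.symm
  refine ⟨fun h => ?_, key x⟩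
  simpa [← mul_apply, hf] using key _ h

lemma apply_mem_freeCycles_right (hf : f * f = 1) (hg : g * g = 1) {x : X} :
    g x ∈ freeCycles f g ↔ x ∈ freeCycles f g := by
  have hgx : g x = f ((f * g) x) := by rw [← mul_apply, ← mul_assoc, hf, one_mul]
  have hr : (f * g).SameCycle x ((f * g) x) := ⟨1, by rw [zpow_one]⟩
  rw [hgx, apply_mem_freeCycles_left hf hg]
  exact ⟨fun h => mem_freeCycles_of_sameCycle h hr.symm, fun h => mem_freeCycles_of_sameCycle h hr⟩

def flipOn (g : Perm X) (S : Set X) (hS : ∀ x, g x ∈ S ↔ x ∈ S) : Perm X :=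
  ofSubtype (g.subtypePerm hS)

section flipOn

variable {S : Set X} {hS : ∀ x, g x ∈ S ↔ x ∈ S} {x : X}

lemma flipOn_apply_of_mem (hx : x ∈ S) : flipOn g S hS x = g x :=
  ofSubtype_subtypePerm_of_mem hS hx

lemma flipOn_apply_of_not_mem (hx : x ∉ S) : flipOn g S hS x = x :=
  ofSubtype_subtypePerm_of_not_mem hS hx

lemma flipOn_mul_self (hg : g * g = 1) : flipOn g S hS * flipOn g S hS = 1 := by
  ext x
  by_cases hx : x ∈ S
  · rw [mul_apply, flipOn_apply_of_mem hx, flipOn_apply_of_mem ((hS x).mpr hx), ← mul_apply, hg]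
  · rw [mul_apply, flipOn_apply_of_not_mem hx, flipOn_apply_of_not_mem hx, one_apply]

lemma commute_flipOn : Commute (flipOn g S hS) g := by
  ext x
  by_cases hx : x ∈ S
  · rw [mul_apply, mul_apply, flipOn_apply_of_mem hx, flipOn_apply_of_mem ((hS x).mpr hx)]
  · rw [mul_apply, mul_apply, flipOn_apply_of_not_mem hx,
      flipOn_apply_of_not_mem (mt (hS x).mp hx)]

end flipOn

end Equiv.Perm

lemma Finset.exists_fixed_of_involution_of_odd_card {α : Type*} {s : Finset α} {f : α → α}
    (hf : ∀ a ∈ s, f a ∈ s) (hinv : ∀ a ∈ s, f (f a) = a) (hodd : Odd s.card) :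
    ∃ a ∈ s, f a = a := by
  let F : Equiv.Perm s := Function.Involutive.toPerm (fun a => ⟨f a, hf a a.2⟩)
    fun a => Subtype.ext (hinv a a.2)
  obtain ⟨⟨a, ha⟩, hfix⟩ := exists_fixed_point_of_prime (p := 2) (n := 1) (σ := F)
    (by rwa [Fintype.card_coe, ← even_iff_two_dvd, Nat.not_even_iff_odd])
    (by rw [pow_one, pow_two]; exact Equiv.ext fun a => Subtype.ext (hinv a a.2))
  exact ⟨a, ha, congrArg Subtype.val hfix⟩

lemma sum_sum_eq_sum_of_symm {ι R : Type*} [Ring R] [CharP R 2] (s : Finset ι) {a : ι → ι → R}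
    (ha : ∀ i j, a i j = a j i) : ∑ i ∈ s, ∑ j ∈ s, a i j = ∑ i ∈ s, a i i := by
  have hoff : ∑ p ∈ s ×ˢ s, (a p.1 p.2 - if p.1 = p.2 then a p.1 p.1 else 0) = 0 := by
    refine Finset.sum_involution (fun p _ => p.swap) (fun p _ => ?_) (fun p _ hp h => ?_)
      (fun p hp => Finset.mem_product.mpr (Finset.mem_product.mp hp).symm) (fun p _ => rfl)
    · by_cases h : p.1 = p.2
      · simp [h]
      · simp only [Prod.fst_swap, Prod.snd_swap, if_neg h, if_neg (Ne.symm h), sub_zero, ha p.2]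
        exact CharTwo.add_self_eq_zero _
    · have hp' : p.1 = p.2 := congrArg Prod.snd h
      exact hp (by rw [if_pos hp', hp', sub_self])
  rw [Finset.sum_sub_distrib, sub_eq_zero, Finset.sum_product, Finset.sum_product] at hoff
  rw [hoff]
  simp

theorem List.sum_sub_alternatingSum_eq_two_mul : ∀ l : List ℕ,
    ((l.map (Nat.cast : ℕ → ℚ)).sum - (l.map (Nat.cast : ℕ → ℚ)).alternatingSum) =
      2 * ((∑ i ∈ Finset.range l.length, if i % 2 = 1 then l.getD i 0 else 0 : ℕ) : ℚ)
  | [] => by simp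
  | [a] => by simp
  | a :: b :: l => by
    have ih := List.sum_sub_alternatingSum_eq_two_mul l
    have hmod : ∀ i, (i + 1 + 1) % 2 = i % 2 := by omega
    rw [List.map_cons, List.map_cons, List.sum_cons, List.sum_cons, List.alternatingSum_cons_cons',
      List.length_cons, List.length_cons, Finset.sum_range_succ', Finset.sum_range_succ']
    simp only [List.getD_cons_succ, List.getD_cons_zero, hmod, Nat.zero_mod]
    push_cast at ih ⊢
    linarith

lemma List.SortedGE.getD_le_getD {l : List ℕ} (hl : l.SortedGE) {i j : ℕ} (hij : i ≤ j) :
    l.getD j 0 ≤ l.getD i 0 := by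
  by_cases hj : j < l.length
  · rw [List.getD_eq_getElem _ _ hj, List.getD_eq_getElem _ _ (hij.trans_lt hj)]
    exact hl.antitone_get (Fin.mk_le_mk.mpr hij)
  · rw [List.getD_eq_default _ _ (not_lt.mp hj)]
    exact Nat.zero_le _

namespace YoungCell

lemma ext_val {a b : YoungCell μ} (h₁ : (a.1 : ℕ) = b.1) (h₂ : (a.2 : ℕ) = b.2) : a = b :=
  Sigma.ext (Fin.ext h₁) ((Fin.heq_ext_iff (by rw [Fin.ext h₁])).mpr h₂)

def InDiagram (μ : List ℕ) (r c : ℕ) : Prop := r < μ.length ∧ c < μ.getD r 0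

lemma inDiagram (a : YoungCell μ) : InDiagram μ a.1 a.2 :=
  ⟨a.1.isLt, by rw [List.getD_eq_get]; exact a.2.isLt⟩

def ofInDiagram {r c : ℕ} (h : InDiagram μ r c) : YoungCell μ :=
  ⟨⟨r, h.1⟩, ⟨c, by rw [← μ.getD_eq_get 0 ⟨r, h.1⟩]; exact h.2⟩⟩

def partnerRow (μ : List ℕ) (r c : ℕ) : ℕ := if InDiagram μ (r ^^^ 1) c then r ^^^ 1 else r

/-- Rows are numbered from `0`, and rows `2i` and `2i + 1` (that is, `r` and `r ^^^ 1`) are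
paired: a cell is sent to the cell in the paired row of its column, if there is one. -/
def partner (a : YoungCell μ) : YoungCell μ :=
  if h : InDiagram μ ((a.1 : ℕ) ^^^ 1) a.2 then ofInDiagram h else a

lemma row_partner (a : YoungCell μ) : ((partner a).1 : ℕ) = partnerRow μ a.1 a.2 := by
  unfold partner partnerRow
  by_cases h : InDiagram μ ((a.1 : ℕ) ^^^ 1) a.2
  · rw [dif_pos h, if_pos h]; rfl
  · rw [dif_neg h, if_neg h]

lemma col_partner (a : YoungCell μ) : ((partner a).2 : ℕ) = a.2 := by
  unfold partner
  by_cases h : InDiagram μ ((a.1 : ℕ) ^^^ 1) a.2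
  · rw [dif_pos h]; rfl
  · rw [dif_neg h]

lemma partner_partner (a : YoungCell μ) : partner (partner a) = a := by
  refine ext_val ?_ (by rw [col_partner, col_partner])
  rw [row_partner, row_partner, col_partner]
  unfold partnerRow
  by_cases h : InDiagram μ ((a.1 : ℕ) ^^^ 1) a.2
  · rw [if_pos h, xor_cancel_right, if_pos (inDiagram a)]
  · rw [if_neg h, if_neg h]

lemma row_partner_of_ne {a : YoungCell μ} (h : partner a ≠ a) :
    ((partner a).1 : ℕ) = a.1 ^^^ 1 := by
  rw [row_partner, partnerRow, if_pos]
  by_contra h'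
  exact h (by rw [partner, dif_neg h'])

lemma partner_ne_of_odd (hμ : μ.SortedGE) {a : YoungCell μ} (ha : Odd (a.1 : ℕ)) :
    partner a ≠ a := by
  have ha' := inDiagram a
  have hr : (a.1 : ℕ) ^^^ 1 = a.1 - 1 := Nat.xor_one_of_odd ha
  have hin : InDiagram μ ((a.1 : ℕ) ^^^ 1) a.2 := by
    refine ⟨by omega, lt_of_lt_of_le ha'.2 ?_⟩
    rw [hr]
    exact hμ.getD_le_getD (Nat.sub_le _ _)
  intro h
  have := congrArg (fun b : YoungCell μ => (b.1 : ℕ)) h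
  simp only [row_partner, partnerRow, if_pos hin] at this
  have := ha.pos
  omega

lemma odd_row_partner_iff {a : YoungCell μ} (h : partner a ≠ a) :
    Odd ((partner a).1 : ℕ) ↔ ¬ Odd (a.1 : ℕ) := by
  have := Nat.xor_mod_two_eq (m := a.1) (n := 1)
  rw [row_partner_of_ne h, Nat.odd_iff, Nat.odd_iff]
  omega

variable (μ) in
def partnerPerm : Equiv.Perm (YoungCell μ) := Function.Involutive.toPerm partner partner_partner

@[simp]
lemma partnerPerm_apply (a : YoungCell μ) : partnerPerm μ a = partner a := rfl

variable (μ) in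
def oddRowCells : Finset (YoungCell μ) := Finset.univ.filter fun a => Odd (a.1 : ℕ)

/-- Every non-trivial orbit `{a, partner a}` contains exactly one cell in an odd row, and every
cell in an odd row lies in such an orbit. -/
lemma card_support_partnerPerm (hμ : μ.SortedGE) :
    (partnerPerm μ).support.card = 2 * (oddRowCells μ).card := by
  have hA : ∀ a, a ∈ oddRowCells μ ↔ Odd (a.1 : ℕ) := by simp [oddRowCells]
  have hsupp : (partnerPerm μ).support = oddRowCells μ ∪ (oddRowCells μ).image partner := by
    ext a
    simp only [Equiv.Perm.mem_support, partnerPerm_apply,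
      Finset.mem_union, Finset.mem_image, hA]
    constructor
    · intro h
      by_cases ha : Odd (a.1 : ℕ)
      · exact Or.inl ha
      · exact Or.inr ⟨partner a, (odd_row_partner_iff h).mpr ha, partner_partner a⟩
    · rintro (ha | ⟨b, hb, rfl⟩)
      · exact partner_ne_of_odd hμ ha
      · rw [partner_partner]; exact (partner_ne_of_odd hμ hb).symm
  have hdisj : Disjoint (oddRowCells μ) ((oddRowCells μ).image partner) := by
    rw [Finset.disjoint_right]
    rintro _ hb' ha
    obtain ⟨b, hb, rfl⟩ := Finset.mem_image.mp hb'
    rw [hA] at hb ha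
    exact (odd_row_partner_iff (partner_ne_of_odd hμ hb)).mp ha hb
  rw [hsupp, Finset.card_union_of_disjoint hdisj,
    Finset.card_image_of_injective _ (Function.Involutive.injective partner_partner), two_mul]

lemma card_oddRowCells :
    (oddRowCells μ).card = ∑ i ∈ Finset.range μ.length, if i % 2 = 1 then μ.getD i 0 else 0 := by
  rw [← Fin.sum_univ_eq_sum_range (fun i => if i % 2 = 1 then μ.getD i 0 else 0),
    oddRowCells, Finset.card_filter, Fintype.sum_sigma]
  refine Finset.sum_congr rfl fun r _ => ?_
  simp [Nat.odd_iff]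

end YoungCell

section Tableau

lemma mem_tabloidOf_iff (s : YoungTableau n μ) (r : Fin μ.length) (x : Fin n) :
    x ∈ (tabloidOf s).1 r ↔ (s.symm x).1 = r := by
  simp only [tabloidOf, Finset.mem_image, Finset.mem_univ, true_and]
  constructor
  · rintro ⟨c, rfl⟩
    simp
  · rintro rfl
    exact ⟨(s.symm x).2, s.apply_symm_apply x⟩

lemma tabloidOf_eq_iff {s s' : YoungTableau n μ} :
    tabloidOf s = tabloidOf s' ↔ ∀ x, rowIdx s x = rowIdx s' x := by
  constructor
  · intro h x
    have := (mem_tabloidOf_iff s' (s.symm x).1 x).mp (h ▸ (mem_tabloidOf_iff s _ x).mpr rfl)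
    exact congrArg Fin.val this.symm
  · intro h
    refine Subtype.ext (funext fun r => Finset.ext fun x => ?_)
    rw [mem_tabloidOf_iff, mem_tabloidOf_iff, ← Fin.val_inj, ← Fin.val_inj]
    exact iff_of_eq (congrArg (· = (r : ℕ)) (h x))

lemma permTabloid_tabloidOf (π : Perm (Fin n)) (s : YoungTableau n μ) :
    permTabloid π (tabloidOf s) = tabloidOf (permTableau π s) :=
  Subtype.ext (funext fun _ => Finset.image_image)

lemma permTabloid_tabloidOf_eq_self_iff (π : Perm (Fin n)) (s : YoungTableau n μ) :
    permTabloid π (tabloidOf s) = tabloidOf s ↔ ∀ x, rowIdx s (π x) = rowIdx s x := by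
  rw [permTabloid_tabloidOf, tabloidOf_eq_iff]
  refine ⟨fun h x => ?_, fun h x => ?_⟩
  · simpa [rowIdx, permTableau] using (h (π x)).symm
  · simpa [rowIdx, permTableau] using (h (π.symm x)).symm

lemma colIdx_permTableau (σ : Perm (Fin n)) (s : YoungTableau n μ) (x : Fin n) :
    colIdx (permTableau σ s) x = colIdx s (σ⁻¹ x) := rfl

lemma rowIdx_permTableau (σ : Perm (Fin n)) (s : YoungTableau n μ) (x : Fin n) :
    rowIdx (permTableau σ s) x = rowIdx s (σ⁻¹ x) := rfl

lemma permTableau_mul (φ σ : Perm (Fin n)) (t : YoungTableau n μ) :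
    permTableau (φ * σ) t = permTableau φ (permTableau σ t) := rfl

lemma mem_colStab_iff {t : YoungTableau n μ} {σ : Perm (Fin n)} :
    σ ∈ colStab t ↔ ∀ x, colIdx (permTableau σ t) x = colIdx t x := by
  simp only [colStab, Finset.mem_filter, Finset.mem_univ, true_and, colIdx_permTableau]
  refine ⟨fun h x => ?_, fun h x => ?_⟩
  · simpa using (h (σ⁻¹ x)).symm
  · simpa using (h (σ x)).symm

def tableauPartner (s : YoungTableau n μ) : Perm (Fin n) :=
  s.permCongr (YoungCell.partnerPerm μ)

variable (s : YoungTableau n μ)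

@[simp]
lemma symm_tableauPartner_apply (x : Fin n) :
    s.symm (tableauPartner s x) = YoungCell.partner (s.symm x) := by
  simp [tableauPartner, Equiv.permCongr_apply]

lemma tableauPartner_mul_self : tableauPartner s * tableauPartner s = 1 := by
  ext x
  simp [tableauPartner, Equiv.permCongr_apply, YoungCell.partner_partner]

lemma colIdx_tableauPartner (x : Fin n) : colIdx s (tableauPartner s x) = colIdx s x := by
  rw [colIdx, symm_tableauPartner_apply, YoungCell.col_partner, colIdx]

lemma rowIdx_tableauPartner_of_ne {x : Fin n} (hx : tableauPartner s x ≠ x) :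
    rowIdx s (tableauPartner s x) = rowIdx s x ^^^ 1 := by
  rw [rowIdx, symm_tableauPartner_apply, YoungCell.row_partner_of_ne, rowIdx]
  intro h
  apply hx
  rw [← s.apply_symm_apply (tableauPartner s x), symm_tableauPartner_apply, h, s.apply_symm_apply]

lemma tableauPartner_permTableau (φ : Perm (Fin n)) :
    tableauPartner (permTableau φ s) = φ * tableauPartner s * φ⁻¹ := by
  ext x
  simp [tableauPartner, permTableau, Equiv.permCongr_apply]

lemma card_support_tableauPartner :
    (tableauPartner s).support.card = (YoungCell.partnerPerm μ).support.card := by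
  rw [← Finset.card_map s.toEmbedding]
  congr 1
  ext x
  simp [tableauPartner, Equiv.permCongr_apply, ← Equiv.eq_symm_apply]

end Tableau

section Flip

variable {s : YoungTableau n μ} {S : Set (Fin n)} {hS : ∀ x, tableauPartner s x ∈ S ↔ x ∈ S}

lemma colIdx_permTableau_flipOn (x : Fin n) :
    colIdx (permTableau (flipOn (tableauPartner s) S hS) s) x = colIdx s x := by
  rw [colIdx_permTableau, inv_eq_of_mul_eq_one_right (flipOn_mul_self (tableauPartner_mul_self s))]
  by_cases hx : x ∈ S
  · rw [flipOn_apply_of_mem hx, colIdx_tableauPartner]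
  · rw [flipOn_apply_of_not_mem hx]

lemma rowIdx_permTableau_flipOn (hfree : ∀ x ∈ S, tableauPartner s x ≠ x) (x : Fin n) :
    rowIdx (permTableau (flipOn (tableauPartner s) S hS) s) x =
      if x ∈ S then rowIdx s x ^^^ 1 else rowIdx s x := by
  rw [rowIdx_permTableau, inv_eq_of_mul_eq_one_right (flipOn_mul_self (tableauPartner_mul_self s))]
  split_ifs with hx
  · rw [flipOn_apply_of_mem hx, rowIdx_tableauPartner_of_ne s (hfree x hx)]
  · rw [flipOn_apply_of_not_mem hx]

end Flip

def colStabFixing (t : YoungTableau n μ) (π : Perm (Fin n)) : Finset (Perm (Fin n)) :=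
  (colStab t).filter fun σ =>
    permTabloid π (tabloidOf (permTableau σ t)) = tabloidOf (permTableau σ t)

lemma permTabloid_permTabloid {π : Perm (Fin n)} (hπ : π * π = 1) (T : Tabloid n μ) :
    permTabloid π (permTabloid π T) = T :=
  Subtype.ext (funext fun _ => by simp [permTabloid, Finset.image_image, ← Perm.coe_mul, hπ])

lemma eq_permTabloid_comm {π : Perm (Fin n)} (hπ : π * π = 1) {T T' : Tabloid n μ} :
    T = permTabloid π T' ↔ T' = permTabloid π T := by
  constructor <;> rintro rfl <;> exact (permTabloid_permTabloid hπ _).symm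

lemma intCast_sign_zmod_two (σ : Perm (Fin n)) : (((sign σ : ℤˣ) : ℤ) : ZMod 2) = 1 := by
  rcases Int.units_eq_one_or (sign σ) with h | h <;> rw [h] <;> decide

lemma tabForm_sum_smul_single {ι : Type*} (s : Finset ι) (c : ι → ℤ) (T : ι → Tabloid n μ)
    (y : Tabloid n μ →₀ ℤ) :
    tabForm (∑ i ∈ s, c i • Finsupp.single (T i) 1) y = ∑ i ∈ s, c i * y (T i) := by
  rw [tabForm, ← Finsupp.sum_finsetSum_index (fun _ => zero_mul _) (fun _ _ _ => add_mul _ _ _)]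
  simp [Finsupp.sum_single_index]

lemma polytabloid_apply (t : YoungTableau n μ) (T : Tabloid n μ) :
    polytabloid t T = ∑ σ ∈ colStab t,
      ((sign σ : ℤˣ) : ℤ) * if tabloidOf (permTableau σ t) = T then 1 else 0 := by
  simp [polytabloid, Finset.sum_apply', Finsupp.single_apply]

lemma permMap_polytabloid (π : Perm (Fin n)) (t : YoungTableau n μ) :
    permMap π (polytabloid t) = ∑ σ ∈ colStab t,
      ((sign σ : ℤˣ) : ℤ) • Finsupp.single (permTabloid π (tabloidOf (permTableau σ t))) 1 := by
  simp [permMap, polytabloid, Finsupp.mapDomain_finsetSum, Finsupp.mapDomain_single]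

/-- Modulo two the signs disappear and `⟨π e_t, e_t⟩` counts the pairs `σ, σ' ∈ C_t` with
`π{σt} = {σ't}`; as `π` is an involution this relation is symmetric, so only the diagonal
counts. -/
theorem intCast_tabForm_permMap_polytabloid {π : Perm (Fin n)} (hπ : π * π = 1)
    (t : YoungTableau n μ) :
    ((tabForm (permMap π (polytabloid t)) (polytabloid t) : ℤ) : ZMod 2) =
      (colStabFixing t π).card := by
  rw [permMap_polytabloid, tabForm_sum_smul_single]
  simp only [polytabloid_apply, Int.cast_sum, Int.cast_mul, intCast_sign_zmod_two, one_mul,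
    Int.cast_ite, Int.cast_one, Int.cast_zero]
  rw [sum_sum_eq_sum_of_symm]
  · rw [Finset.sum_boole]
    simp only [colStabFixing, eq_comm]
  · exact fun _ _ => if_congr (eq_permTabloid_comm hπ) rfl rfl

section ColStabFixing

variable {t : YoungTableau n μ} {π σ : Perm (Fin n)}

lemma mem_colStabFixing_iff : σ ∈ colStabFixing t π ↔
    (∀ x, colIdx (permTableau σ t) x = colIdx t x) ∧
      ∀ x, rowIdx (permTableau σ t) (π x) = rowIdx (permTableau σ t) x := by
  rw [colStabFixing, Finset.mem_filter, mem_colStab_iff, permTabloid_tabloidOf_eq_self_iff]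

lemma flipOn_freeCycles_mul_mem_colStabFixing (hπ : π * π = 1) (hσ : σ ∈ colStabFixing t π) :
    flipOn (tableauPartner (permTableau σ t)) (freeCycles π (tableauPartner (permTableau σ t)))
      (fun _ => apply_mem_freeCycles_right hπ (tableauPartner_mul_self _)) * σ ∈
      colStabFixing t π := by
  rw [mem_colStabFixing_iff] at hσ ⊢
  rw [permTableau_mul]
  refine ⟨fun x => by rw [colIdx_permTableau_flipOn, hσ.1], fun x => ?_⟩
  rw [rowIdx_permTableau_flipOn (fun _ => apply_ne_of_mem_freeCycles),
    rowIdx_permTableau_flipOn (fun _ => apply_ne_of_mem_freeCycles),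
    apply_mem_freeCycles_left hπ (tableauPartner_mul_self _), hσ.2]

end ColStabFixing

theorem exists_mem_colStabFixing_freeCycles_eq_empty {t : YoungTableau n μ} {π : Perm (Fin n)}
    (hπ : π * π = 1) (hodd : Odd (colStabFixing t π).card) :
    ∃ σ ∈ colStabFixing t π, freeCycles π (tableauPartner (permTableau σ t)) = ∅ := by
  let swapRows : Perm (Fin n) → Perm (Fin n) := fun σ =>
    flipOn (tableauPartner (permTableau σ t)) (freeCycles π (tableauPartner (permTableau σ t)))
      (fun _ => apply_mem_freeCycles_right hπ (tableauPartner_mul_self _))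
  have hflip : ∀ σ, swapRows (swapRows σ * σ) = swapRows σ := by
    intro σ
    have : tableauPartner (permTableau (swapRows σ * σ) t) = tableauPartner (permTableau σ t) := by
      rw [permTableau_mul, tableauPartner_permTableau, commute_flipOn.eq, mul_inv_cancel_right]
    simp only [swapRows, this]
  obtain ⟨σ, hσ, hfix⟩ :=
    Finset.exists_fixed_of_involution_of_odd_card (f := fun σ => swapRows σ * σ)
      (fun σ hσ => flipOn_freeCycles_mul_mem_colStabFixing hπ hσ)
      (fun σ _ => by rw [hflip, ← mul_assoc, flipOn_mul_self (tableauPartner_mul_self _), one_mul])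
      hodd
  refine ⟨σ, hσ, Set.eq_empty_of_forall_notMem fun x hx => apply_ne_of_mem_freeCycles hx ?_⟩
  calc tableauPartner (permTableau σ t) x = swapRows σ x := (flipOn_apply_of_mem hx).symm
    _ = x := by rw [mul_eq_right.mp hfix, one_apply]

theorem of_odd_tabForm_lower_bound_general
    (hdist : μ.Chain' (· > ·)) (hsum : μ.sum = n)
    (t : YoungTableau n μ) (m : ℕ) (π : Equiv.Perm (Fin n))
    (hπ : π.cycleType = Multiset.replicate m 2)
    (hodd : Odd (tabForm (permMap π (polytabloid t)) (polytabloid t))) :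
    ((n : ℚ) - (μ.map fun i => (i : ℚ)).alternatingSum) / 2 ≤ m ∧
    (∑ i ∈ Finset.range μ.length, if i % 2 = 1 then μ.getD i 0 else 0) ≤ m := by
  have hπ2 : π * π = 1 := by
    rw [← pow_two, pow_prime_eq_one_iff]
    exact fun c hc => Multiset.eq_of_mem_replicate (hπ ▸ hc)
  have hF : Odd (colStabFixing t π).card := by
    rw [← ZMod.natCast_eq_one_iff_odd, ← intCast_tabForm_permMap_polytabloid hπ2]
    exact ZMod.intCast_eq_one_iff_odd.mpr hodd
  obtain ⟨σ, -, hfree⟩ := exists_mem_colStabFixing_freeCycles_eq_empty hπ2 hF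
  have hsupp := card_support_le_of_forall_sameCycle hπ2
    (tableauPartner_mul_self (permTableau σ t))
    fun x _ => by simpa [freeCycles] using Set.eq_empty_iff_forall_notMem.mp hfree x
  rw [card_support_tableauPartner, YoungCell.card_support_partnerPerm
    (List.IsChain.sortedGT hdist).sortedGE, YoungCell.card_oddRowCells, ← sum_cycleType, hπ,
    Multiset.sum_replicate, smul_eq_mul] at hsupp
  have hle : (∑ i ∈ Finset.range μ.length, if i % 2 = 1 then μ.getD i 0 else 0) ≤ m := by omega
  refine ⟨?_, hle⟩
  -- `μ.map fun i => (i : ℚ)` elaborates with `μ` first coerced to `List ℚ` through the list monad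
  have hcast : (μ.map fun i => (i : ℚ)) = μ.map (Nat.cast : ℕ → ℚ) := by
    simp [List.map_eq_flatMap]
  rw [hcast, ← hsum, Nat.cast_list_sum, List.sum_sub_alternatingSum_eq_two_mul,
    mul_div_cancel_left₀ _ two_ne_zero]
  exact_mod_cast hle

/-- Let `μ` be a partition of `n` with distinct parts, `t` a `μ`-tableau and `π ∈ S_n` an
`m`-involution (`m ≥ 1`) with `⟨π·e_t, e_t⟩` odd.  Then `m ≥ (n − |μ|_a)/2`; equivalently,
`m ≥ Σ_{j ≥ 1} μ_{2j}`. -/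
theorem of_odd_tabForm_lower_bound
    (hpos : ∀ i ∈ μ, 0 < i) (hdist : μ.Chain' (· > ·)) (hsum : μ.sum = n)
    (t : YoungTableau n μ) (m : ℕ) (hm : 1 ≤ m) (π : Equiv.Perm (Fin n))
    (hπ : π.cycleType = Multiset.replicate m 2)
    (hodd : Odd (tabForm (permMap π (polytabloid t)) (polytabloid t))) :
    ((n : ℚ) - (μ.map fun i => (i : ℚ)).alternatingSum) / 2 ≤ m ∧
    (∑ i ∈ Finset.range μ.length, if i % 2 = 1 then μ.getD i 0 else 0) ≤ m :=
  of_odd_tabForm_lower_bound_general hdist hsum t m π hπ hodd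

end
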